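/- If p < q in the treedoc path order and q is not a descendant of p (p is not a prefix of q), then p ++ [1] ≤ q in the treedoc path order extended to its reflexive closure; in particular p < p ++ [1] and p++[1] < q or p++[1] = q. -/

import Mathlib

def tlt (p q : List Bool) : Prop :=
  (∃ r, q = p ++ true :: r) ∨
  (∃ r, p = q ++ false :: r) ∨
  (∃ c r1 r2, p = c ++ false :: r1 ∧ q = c ++ true :: r2)

theorem tlt_append_true_right (p : List Bool) : tlt p (p ++ [true]) :=
  Or.inl ⟨[], rfl⟩

/-- Since `q` is not below `p`, `p ++ s` and `q` separate exactly where `p` and `q` do. -/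
theorem tlt_append_of_tlt_of_not_prefix {p q : List Bool} (hpq : tlt p q) (hnpre : ¬ p <+: q)
    (s : List Bool) : tlt (p ++ s) q := by
  rcases hpq with ⟨r, hq⟩ | ⟨r, hp⟩ | ⟨c, r1, r2, hp, hq⟩
  · exact absurd ⟨true :: r, hq.symm⟩ hnpre
  · exact Or.inr (Or.inl ⟨r ++ s, by simp [hp]⟩)
  · exact Or.inr (Or.inr ⟨c, r1 ++ s, r2, by simp [hp], hq⟩)

theorem right_child_le (p q : List Bool) (hpq : tlt p q)
    (hnpre : ¬ p <+: q) :
    tlt p (p ++ [true]) ∧ (tlt (p ++ [true]) q ∨ p ++ [true] = q) :=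
  ⟨tlt_append_true_right p, Or.inl (tlt_append_of_tlt_of_not_prefix hpq hnpre [true])⟩
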